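/- arXiv:1510.07304 — 4 statements merged into one kernel-verified Lean document; each statement's English description precedes it below -/
import Mathlib

section
/- Let D be a division ring that is finite-dimensional over its center F with dim_F D = k, and let n ≥ 3. If there exists a noncentral matrix A ∈ M_n(D) such that the F-subalgebra ⟨A⟩ generated by A is a field extension of F of degree nk with no proper intermediate fields, then the commuting graph Γ(M_n(D)) is not connected. -/
/-!
Let `S = F[A]`. As `S` is a field, `s ↦ s e₁` is injective, and since `dim_F S = nk = dim_F Dⁿ`
it is onto: `e₁` is a cyclic vector for the commutative algebra `S`, which forces `S` to be its
own centralizer. Without intermediate fields every noncentral `B ∈ S` generates `S`, so whatever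
commutes with `B` commutes with `S` and lies in `S`; hence the component of `A` stays in `S`.
The noncentral matrix unit `E₁₂` squares to zero, so it is not in the field `S`.
-/

/-- The commuting graph of a ring `R`: vertices are the noncentral elements of `R`,
and two distinct vertices are adjacent iff they commute. -/
def commutingGraph (R : Type*) [Ring R] : SimpleGraph {x : R // x ∉ Set.center R} where
  Adj a b := a ≠ b ∧ Commute (a : R) (b : R)
  symm := ⟨fun _ _ h => ⟨h.1.symm, h.2.symm⟩⟩
  loopless := ⟨fun _ h => h.1 rfl⟩

open Matrix Module

lemma SimpleGraph.Reachable.mem_of_adj_mem {V : Type*} {G : SimpleGraph V} {s : Set V}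
    (hs : ∀ u w, G.Adj u w → u ∈ s → w ∈ s) {u w : V} (h : G.Reachable u w) (hu : u ∈ s) :
    w ∈ s := by
  obtain ⟨p⟩ := h
  induction p with
  | nil => exact hu
  | cons hadj _ ih => exact ih (hs _ _ hadj hu)

namespace Subalgebra

variable {F R : Type*} [Field F] [Ring R] [Algebra F R]

theorem eq_zero_of_mul_self_eq_zero {S : Subalgebra F R} (hS : IsField S) {x : R} (hx : x ∈ S)
    (hxx : x * x = 0) : x = 0 := by
  let := hS.toField
  have : (⟨x, hx⟩ : S) * ⟨x, hx⟩ = 0 := Subtype.ext hxx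
  exact congrArg Subtype.val (mul_self_eq_zero.mp this)

theorem isField_of_le {S T : Subalgebra F R} (hS : IsField S) [FiniteDimensional F S]
    (hTS : T ≤ S) : IsField T := by
  let := hS.toField
  let T' : Subalgebra F S := T.comap S.val
  have hT' : T'.map S.val = T := by
    rw [map_comap_eq, range_val, inf_eq_left.mpr hTS]
  rw [← hT']
  exact (equivMapOfInjective T' S.val Subtype.val_injective).symm.toMulEquiv.isField
    (isField_of_algebraic T')

theorem adjoin_singleton_eq_of_no_intermediate_field {S : Subalgebra F R} (hS : IsField S)
    [FiniteDimensional F S] (hmin : ¬ ∃ K : Subalgebra F R, IsField K ∧ ⊥ < K ∧ K < S)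
    {b : R} (hbS : b ∈ S) (hb : b ∉ (⊥ : Subalgebra F R)) : Algebra.adjoin F {b} = S := by
  have hle : Algebra.adjoin F {b} ≤ S := Algebra.adjoin_le (Set.singleton_subset_iff.mpr hbS)
  by_contra hne
  refine hmin ⟨_, isField_of_le hS hle, bot_lt_iff_ne_bot.mpr ?_, hle.lt_of_ne hne⟩
  rintro hbot
  exact hb (hbot ▸ Algebra.self_mem_adjoin_singleton F b)

theorem mem_of_commute_of_no_intermediate_field {S : Subalgebra F R} (hS : IsField S)
    [FiniteDimensional F S] (hmin : ¬ ∃ K : Subalgebra F R, IsField K ∧ ⊥ < K ∧ K < S)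
    (hcent : Set.centralizer (S : Set R) ⊆ S) {b x : R} (hbS : b ∈ S)
    (hb : b ∉ Set.center R) (hbx : Commute b x) : x ∈ S := by
  have hbot : b ∉ (⊥ : Subalgebra F R) := fun h => hb (bot_le (a := center F R) h)
  refine hcent fun s hs => ?_
  rw [← adjoin_singleton_eq_of_no_intermediate_field hS hmin hbS hbot] at hs
  exact (Algebra.commute_of_mem_adjoin_singleton_of_commute hs hbx.symm).eq.symm

end Subalgebra

namespace Matrix

variable {ι D : Type*} [Fintype ι]

def IsCyclicVector [Semiring D] (S : Set (Matrix ι ι D)) (v : ι → D) : Prop :=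
  ∀ w, ∃ s ∈ S, s *ᵥ v = w

theorem centralizer_subset_of_isCyclicVector [Semiring D] {S : Set (Matrix ι ι D)}
    (hS : S ⊆ S.centralizer) {v : ι → D} (hv : IsCyclicVector S v) : S.centralizer ⊆ S := by
  intro x hx
  obtain ⟨s₀, hs₀, hxv⟩ := hv (x *ᵥ v)
  suffices x = s₀ from this ▸ hs₀
  refine ext_iff_mulVec.mpr fun w => ?_
  obtain ⟨t, ht, rfl⟩ := hv w
  calc x *ᵥ t *ᵥ v = t *ᵥ x *ᵥ v := by rw [mulVec_mulVec, mulVec_mulVec, hx t ht]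
    _ = s₀ *ᵥ t *ᵥ v := by rw [← hxv, mulVec_mulVec, mulVec_mulVec, hS ht s₀ hs₀]

theorem isCyclicVector_of_isField [DecidableEq ι] {F : Type*} [Field F] [Ring D] [Algebra F D]
    [FiniteDimensional F D] {S : Subalgebra F (Matrix ι ι D)} (hS : IsField S)
    (hdim : finrank F S = finrank F (ι → D)) {v : ι → D} (hv : v ≠ 0) :
    IsCyclicVector (S : Set (Matrix ι ι D)) v := by
  let L : S →ₗ[F] (ι → D) :=
    { toFun := fun s => (s : Matrix ι ι D) *ᵥ v
      map_add' := fun s t => add_mulVec _ _ _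
      map_smul' := fun c s => smul_mulVec _ _ _ }
  have hL : Function.Injective L := by
    refine (injective_iff_map_eq_zero L).mpr fun s hs => ?_
    by_contra hne
    obtain ⟨t, hts⟩ := hS.mul_inv_cancel hne
    refine hv ?_
    calc v = ((s * t : S) : Matrix ι ι D) *ᵥ v := by rw [hts]; simp
      _ = 0 := by
        rw [hS.mul_comm, Subalgebra.coe_mul, ← mulVec_mulVec]
        simp only [show (s : Matrix ι ι D) *ᵥ v = 0 from hs, mulVec_zero]
  intro w
  obtain ⟨s, hs⟩ := (LinearMap.injective_iff_surjective_of_finrank_eq_finrank hdim).mp hL w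
  exact ⟨s, s.2, hs⟩

theorem single_one_notMem_center [DecidableEq ι] [Semiring D] [Nontrivial D] {i j : ι}
    (hij : i ≠ j) : single i j (1 : D) ∉ Set.center (Matrix ι ι D) := by
  intro h
  have := diag_eq_of_commute_single ((Set.mem_center_iff.mp h).comm (single i i (1 : D)))
  simp [hij] at this

end Matrix

theorem not_connected_of_no_intermediate_field_general
    (F D : Type*) [Field F] [DivisionRing D] [Algebra F D]
    [FiniteDimensional F D]
    (k : ℕ) (hk : Module.finrank F D = k) (n : ℕ) (hn : 3 ≤ n)
    (A : Matrix (Fin n) (Fin n) D)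
    (hA : A ∉ Set.center (Matrix (Fin n) (Fin n) D))
    (hfield : IsField (Algebra.adjoin F {A}))
    (hdeg : Module.finrank F (Algebra.adjoin F {A}) = n * k)
    (hnoint : ¬ ∃ K : Subalgebra F (Matrix (Fin n) (Fin n) D),
        IsField K ∧ ⊥ < K ∧ K < Algebra.adjoin F {A}) :
    ¬ (commutingGraph (Matrix (Fin n) (Fin n) D)).Connected := by
  intro hconn
  set S := Algebra.adjoin F {A}
  let i₀ : Fin n := ⟨0, by omega⟩
  let i₁ : Fin n := ⟨1, by omega⟩
  have hi : i₀ ≠ i₁ := by simp [i₀, i₁, Fin.ext_iff]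
  have hdim : finrank F S = finrank F (Fin n → D) := by
    rw [hdeg, finrank_pi_fintype, Finset.sum_const, Finset.card_univ, Fintype.card_fin, hk,
      smul_eq_mul]
  have hcent : Set.centralizer (S : Set (Matrix (Fin n) (Fin n) D)) ⊆ S :=
    centralizer_subset_of_isCyclicVector
      (fun s hs t ht => congrArg Subtype.val (hfield.mul_comm ⟨t, ht⟩ ⟨s, hs⟩))
      (isCyclicVector_of_isField hfield hdim (v := Pi.single i₀ 1) (by simp))
  have hE : single i₀ i₁ (1 : D) ∉ Set.center (Matrix (Fin n) (Fin n) D) :=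
    single_one_notMem_center hi
  have hES : single i₀ i₁ (1 : D) ∉ S := fun hmem =>
    hE (Subalgebra.eq_zero_of_mul_self_eq_zero hfield hmem
      (single_mul_single_of_ne _ _ _ _ hi.symm _) ▸ Set.zero_mem_center)
  have hreach := hconn.preconnected ⟨A, hA⟩ ⟨_, hE⟩
  refine hES (hreach.mem_of_adj_mem (s := Subtype.val ⁻¹' (S : Set (Matrix (Fin n) (Fin n) D)))
    ?_ (Algebra.self_mem_adjoin_singleton F A))
  exact fun u w huw huS => Subalgebra.mem_of_commute_of_no_intermediate_field hfield hnoint hcent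
    huS u.2 huw.2

/-- If there is a noncentral matrix `A ∈ M_n(D)` such that `⟨A⟩` is a field
extension of `F` of degree `nk` with no proper intermediate fields, then the commuting
graph of `M_n(D)` is not connected. -/
theorem not_connected_of_no_intermediate_field
    (F D : Type*) [Field F] [DivisionRing D] [Algebra F D]
    (hcen : Subalgebra.center F D = ⊥) [FiniteDimensional F D]
    (k : ℕ) (hk : Module.finrank F D = k) (n : ℕ) (hn : 3 ≤ n)
    (A : Matrix (Fin n) (Fin n) D)
    (hA : A ∉ Set.center (Matrix (Fin n) (Fin n) D))
    (hfield : IsField (Algebra.adjoin F {A}))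
    (hdeg : Module.finrank F (Algebra.adjoin F {A}) = n * k)
    (hnoint : ¬ ∃ K : Subalgebra F (Matrix (Fin n) (Fin n) D),
        IsField K ∧ ⊥ < K ∧ K < Algebra.adjoin F {A}) :
    ¬ (commutingGraph (Matrix (Fin n) (Fin n) D)).Connected :=
  not_connected_of_no_intermediate_field_general F D k hk n hn A hA hfield hdeg hnoint
end

section
/- Let D be a division ring that is finite-dimensional over its center F with dim_F D = k, and let n ≥ 3. Suppose A ∈ M_n(D) is a noncentral matrix such that the F-subalgebra ⟨A⟩ generated by A is a field extension of F of degree nk with no proper intermediate fields. Then for every noncentral matrix B ∈ M_n(D) that commutes with A, the centralizer of B in M_n(D) equals the centralizer of A in M_n(D). -/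
/-!
Let `K = F[A]` and let `M_n(D)` act on `V = Dⁿ`, an `F`-space of dimension `nk`. Since
`[K : F] = nk`, the tower law makes `V` one-dimensional over the field `K`, so every matrix
commuting with `A` acts `K`-linearly on `V`, hence as a scalar of `K`: the centralizer of `A` is `K`
itself. A noncentral `B` commuting with `A` therefore lies in `K`, and `F[B]` is a subfield of `K`
strictly above `F`; as there are no intermediate fields, `F[B] = K`, and the centralizers agree.
-/

theorem Algebra.centralizer_coe_adjoin (R : Type*) {A : Type*} [CommSemiring R] [Semiring A]
    [Algebra R A] (s : Set A) : Set.centralizer (adjoin R s : Set A) = s.centralizer :=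
  (Set.centralizer_subset subset_adjoin).antisymm fun y hy _ hz ↦
    (adjoin_le_centralizer_centralizer R s hz y hy).symm

theorem Algebra.adjoin_singleton_ne_bot (R : Type*) {A : Type*} [CommSemiring R] [Semiring A]
    [Algebra R A] {x : A} (hx : x ∉ Set.center A) : adjoin R {x} ≠ ⊥ := fun hbot ↦ hx <| by
  obtain ⟨r, rfl⟩ := mem_bot.mp (hbot ▸ self_mem_adjoin_singleton R x)
  exact Set.algebraMap_mem_center r

instance Matrix.faithfulSMul_vec {n R : Type*} [Fintype n] [DecidableEq n] [Semiring R] :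
    FaithfulSMul (Matrix n n R) (n → R) :=
  ⟨Matrix.ext_iff_smul.mpr⟩

namespace Subalgebra

variable {F S : Type*} [Field F] [Ring S] [Algebra F S]

theorem centralizer_eq_self_of_finrank_eq (V : Type*) [AddCommGroup V] [Module F V] [Module S V]
    [IsScalarTower F S V] [FaithfulSMul S V] (K : Subalgebra F S) (hK : IsField K)
    [FiniteDimensional F K] (hrank : Module.finrank F K = Module.finrank F V) :
    Set.centralizer (K : Set S) = K := by
  let := hK.toField
  have hV : Module.finrank K V = 1 := by
    have tower := Module.finrank_mul_finrank F K V
    rw [hrank] at tower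
    exact Nat.eq_of_mul_eq_mul_left (hrank ▸ Module.finrank_pos) (by rw [tower, mul_one])
  refine subset_antisymm (fun X hX ↦ ?_) fun x hx y hy ↦ congrArg Subtype.val
    (hK.mul_comm ⟨y, hy⟩ ⟨x, hx⟩)
  let u : V →ₗ[K] V :=
    { toFun := (X • ·)
      map_add' := smul_add X
      map_smul' := fun c v ↦ by
        simp only [RingHom.id_apply, smul_def, smul_smul, hX c c.2] }
  obtain ⟨c, hc, -⟩ := u.existsUnique_eq_smul_id_of_finrank_eq_one hV
  have hXc : X = c := eq_of_smul_eq_smul fun v ↦ LinearMap.congr_fun hc v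
  exact hXc ▸ c.2

theorem isField_adjoin_singleton_of_mem {K : Subalgebra F S} (hK : IsField K)
    [FiniteDimensional F K] {x : S} (hx : x ∈ K) : IsField (Algebra.adjoin F {x}) := by
  let := hK.toField
  have hmap : (Algebra.adjoin F {(⟨x, hx⟩ : K)}).map K.val = Algebra.adjoin F {x} := by
    rw [AlgHom.map_adjoin, Set.image_singleton, coe_val]
  rw [← hmap]
  exact MulEquiv.isField (isField_of_algebraic _)
    (equivMapOfInjective _ K.val Subtype.val_injective).symm.toMulEquiv

end Subalgebra

theorem centralizer_eq_of_no_intermediate_field_general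
    (F D : Type*) [Field F] [DivisionRing D] [Algebra F D]
    [FiniteDimensional F D]
    (k : ℕ) (hk : Module.finrank F D = k) (n : ℕ)
    (A : Matrix (Fin n) (Fin n) D)
    (hfield : IsField (Algebra.adjoin F {A}))
    (hdeg : Module.finrank F (Algebra.adjoin F {A}) = n * k)
    (hnoint : ¬ ∃ K : Subalgebra F (Matrix (Fin n) (Fin n) D),
        IsField K ∧ ⊥ < K ∧ K < Algebra.adjoin F {A}) :
    ∀ B : Matrix (Fin n) (Fin n) D,
      B ∉ Set.center (Matrix (Fin n) (Fin n) D) → Commute A B →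
      Set.centralizer {B} = Set.centralizer {A} := by
  intro B hB hAB
  have hcentA : Set.centralizer {A} = Algebra.adjoin F {A} := by
    rw [← Algebra.centralizer_coe_adjoin F]
    exact (Algebra.adjoin F {A}).centralizer_eq_self_of_finrank_eq (Fin n → D) hfield <| by
      simp [hdeg, Module.finrank_pi_fintype, hk, mul_comm]
  have hBK : B ∈ Algebra.adjoin F {A} := by
    rw [← SetLike.mem_coe, ← hcentA]
    exact Set.mem_centralizer_iff.mpr fun _ h ↦ (Set.mem_singleton_iff.mp h) ▸ hAB
  have hadjoin : Algebra.adjoin F {B} = Algebra.adjoin F {A} := by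
    by_contra hne
    exact hnoint ⟨_, Subalgebra.isField_adjoin_singleton_of_mem hfield hBK,
      (Algebra.adjoin_singleton_ne_bot F hB).bot_lt,
      (Algebra.adjoin_le (Set.singleton_subset_iff.mpr hBK)).lt_of_ne hne⟩
  rw [← Algebra.centralizer_coe_adjoin F, hadjoin, Algebra.centralizer_coe_adjoin]

/-- If `A ∈ M_n(D)` is noncentral and `⟨A⟩` is a field extension of `F` of
degree `nk` with no proper intermediate fields, then every noncentral matrix `B`
commuting with `A` has the same centralizer as `A`. -/
theorem centralizer_eq_of_no_intermediate_field
    (F D : Type*) [Field F] [DivisionRing D] [Algebra F D]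
    (hcen : Subalgebra.center F D = ⊥) [FiniteDimensional F D]
    (k : ℕ) (hk : Module.finrank F D = k) (n : ℕ) (hn : 3 ≤ n)
    (A : Matrix (Fin n) (Fin n) D)
    (hA : A ∉ Set.center (Matrix (Fin n) (Fin n) D))
    (hfield : IsField (Algebra.adjoin F {A}))
    (hdeg : Module.finrank F (Algebra.adjoin F {A}) = n * k)
    (hnoint : ¬ ∃ K : Subalgebra F (Matrix (Fin n) (Fin n) D),
        IsField K ∧ ⊥ < K ∧ K < Algebra.adjoin F {A}) :
    ∀ B : Matrix (Fin n) (Fin n) D,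
      B ∉ Set.center (Matrix (Fin n) (Fin n) D) → Commute A B →
      Set.centralizer {B} = Set.centralizer {A} :=
  centralizer_eq_of_no_intermediate_field_general F D k hk n A hfield hdeg hnoint
end

section
/- Let D be a division ring that is finite-dimensional over its center F, and let n ≥ 3. For a noncentral matrix A ∈ M_n(D), if the F-subalgebra ⟨A⟩ generated by A is not a field, then d(A, E_n ∪ N_n) ≤ 1; that is, either A is itself a noncentral idempotent or noncentral nilpotent matrix, or A commutes with some noncentral idempotent or noncentral nilpotent matrix distinct from A. -/
theorem commutingGraph_edist_le_one_of_commute {R : Type*} [Ring R]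
    {a b : {x : R // x ∉ Set.center R}} (h : Commute (a : R) b) :
    (commutingGraph R).edist a b ≤ 1 := by
  rcases eq_or_ne a b with rfl | hne
  · simp
  · have hadj : (commutingGraph R).Adj a b := ⟨hne, h⟩
    exact (SimpleGraph.edist_eq_one_iff_adj.mpr hadj).le

namespace IsArtinianRing

variable {R : Type*} [CommRing R] [IsArtinianRing R]

theorem exists_isIdempotentElem_ne_zero_ne_one {x : R} (hunit : ¬IsUnit x)
    (hnil : ¬IsNilpotent x) : ∃ e : R, IsIdempotentElem e ∧ e ≠ 0 ∧ e ≠ 1 := by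
  obtain ⟨n, y, hy⟩ := IsArtinian.exists_pow_succ_smul_dvd x (1 : R)
  simp only [smul_eq_mul, mul_one] at hy
  have hpow : ∀ k, x ^ (n + k) * y ^ k = x ^ n := by
    intro k
    induction k with
    | zero => simp
    | succ k ih =>
      calc x ^ (n + (k + 1)) * y ^ (k + 1) = x ^ k * y ^ k * (x ^ (n + 1) * y) := by ring
        _ = x ^ (n + k) * y ^ k := by rw [hy]; ring
        _ = x ^ n := ih
  refine ⟨x ^ n * y ^ n, ?_, ?_, ?_⟩
  · calc x ^ n * y ^ n * (x ^ n * y ^ n) = x ^ (n + n) * y ^ n * y ^ n := by ring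
      _ = x ^ n * y ^ n := by rw [hpow]
  · intro he
    refine hnil ⟨n, ?_⟩
    rw [← hpow n, pow_add, mul_assoc, he, mul_zero]
  · intro he
    have : IsUnit (x * (x ^ n * y)) := by
      rw [← mul_assoc, ← pow_succ', hy]
      exact IsUnit.of_mul_eq_one _ he
    exact hunit (isUnit_of_mul_isUnit_left this)

theorem exists_ne_zero_isNilpotent_or_isIdempotentElem_of_not_isField [Nontrivial R]
    (h : ¬IsField R) :
    ∃ x : R, x ≠ 0 ∧ (IsNilpotent x ∨ IsIdempotentElem x ∧ x ≠ 1) := by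
  obtain ⟨x, hx0, hunit⟩ := Ring.exists_not_isUnit_of_not_isField h
  by_cases hnil : IsNilpotent x
  · exact ⟨x, hx0, Or.inl hnil⟩
  · obtain ⟨e, he, he0, he1⟩ := exists_isIdempotentElem_ne_zero_ne_one hunit hnil
    exact ⟨e, he0, Or.inr ⟨he, he1⟩⟩

end IsArtinianRing

open scoped IsMulCommutative in
theorem Algebra.exists_ne_zero_isNilpotent_or_isIdempotentElem_mem_adjoin_singleton
    (F : Type*) {A : Type*} [Field F] [Ring A] [Algebra F A] [FiniteDimensional F A]
    [Nontrivial A] {a : A} (h : ¬IsField (Algebra.adjoin F {a})) :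
    ∃ x ∈ Algebra.adjoin F {a}, x ≠ 0 ∧ (IsNilpotent x ∨ IsIdempotentElem x ∧ x ≠ 1) := by
  have : IsArtinianRing (Algebra.adjoin F {a}) := IsArtinianRing.of_finite F _
  obtain ⟨⟨x, hx⟩, hx0, hnil | ⟨hidem, hx1⟩⟩ :=
    IsArtinianRing.exists_ne_zero_isNilpotent_or_isIdempotentElem_of_not_isField h
  · exact ⟨x, hx, fun h ↦ hx0 (Subtype.ext h),
      Or.inl (hnil.map (Algebra.adjoin F {a}).val)⟩
  · exact ⟨x, hx, fun h ↦ hx0 (Subtype.ext h),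
      Or.inr ⟨hidem.map (Algebra.adjoin F {a}).val, fun h ↦ hx1 (Subtype.ext h)⟩⟩

namespace Matrix

variable {n D : Type*} [Fintype n] [DecidableEq n] [Ring D]

theorem notMem_center_of_isNilpotent [IsReduced D] {X : Matrix n n D} (hX : IsNilpotent X)
    (h0 : X ≠ 0) : X ∉ Set.center (Matrix n n D) := by
  obtain ⟨i, -⟩ := Function.ne_iff.mp h0
  have : Nonempty n := ⟨i⟩
  rw [center_eq_scalar_image]
  rintro ⟨d, -, rfl⟩
  have hd : IsNilpotent d := (IsNilpotent.map_iff fun _ _ ↦ scalar_inj.mp).mp hX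
  exact h0 (by rw [hd.eq_zero, map_zero])

theorem notMem_center_of_isIdempotentElem [NoZeroDivisors D] {X : Matrix n n D}
    (hX : IsIdempotentElem X) (h0 : X ≠ 0) (h1 : X ≠ 1) : X ∉ Set.center (Matrix n n D) := by
  obtain ⟨i, -⟩ := Function.ne_iff.mp h0
  have : Nonempty n := ⟨i⟩
  rw [center_eq_scalar_image]
  rintro ⟨d, -, rfl⟩
  have hd : IsIdempotentElem d := (scalar_inj (n := n)).mp (by rw [map_mul]; exact hX)
  rcases IsIdempotentElem.iff_eq_zero_or_one.mp hd with rfl | rfl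
  · exact h0 (map_zero _)
  · exact h1 (map_one _)

end Matrix

theorem dist_to_idempotents_nilpotents_le_one_of_not_isField_general
    (F D : Type*) [Field F] [DivisionRing D] [Algebra F D]
    [FiniteDimensional F D]
    (n : ℕ)
    (A : Matrix (Fin n) (Fin n) D)
    (hA : A ∉ Set.center (Matrix (Fin n) (Fin n) D))
    (hnotfield : ¬ IsField (Algebra.adjoin F {A})) :
    ∃ (X : Matrix (Fin n) (Fin n) D) (hX : X ∉ Set.center (Matrix (Fin n) (Fin n) D)),
      (IsIdempotentElem X ∨ IsNilpotent X) ∧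
      (commutingGraph (Matrix (Fin n) (Fin n) D)).edist ⟨A, hA⟩ ⟨X, hX⟩ ≤ 1 := by
  have : Nontrivial (Matrix (Fin n) (Fin n) D) :=
    nontrivial_of_ne 0 A fun h ↦ hA (h ▸ Set.zero_mem_center)
  obtain ⟨X, hXA, hX0, hX⟩ :=
    Algebra.exists_ne_zero_isNilpotent_or_isIdempotentElem_mem_adjoin_singleton F hnotfield
  have hcomm := Algebra.commute_of_mem_adjoin_self hXA
  rcases hX with hnil | ⟨hidem, hX1⟩
  · exact ⟨X, Matrix.notMem_center_of_isNilpotent hnil hX0, Or.inr hnil,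
      commutingGraph_edist_le_one_of_commute hcomm⟩
  · exact ⟨X, Matrix.notMem_center_of_isIdempotentElem hidem hX0 hX1, Or.inl hidem,
      commutingGraph_edist_le_one_of_commute hcomm⟩

/-- For a noncentral matrix `A ∈ M_n(D)`, if the `F`-algebra `⟨A⟩` generated
by `A` is not a field, then the distance from `A` to the set of noncentral idempotent or
noncentral nilpotent matrices is at most 1. -/
theorem dist_to_idempotents_nilpotents_le_one_of_not_isField
    (F D : Type*) [Field F] [DivisionRing D] [Algebra F D]
    (hcen : Subalgebra.center F D = ⊥) [FiniteDimensional F D]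
    (n : ℕ) (hn : 3 ≤ n)
    (A : Matrix (Fin n) (Fin n) D)
    (hA : A ∉ Set.center (Matrix (Fin n) (Fin n) D))
    (hnotfield : ¬ IsField (Algebra.adjoin F {A})) :
    ∃ (X : Matrix (Fin n) (Fin n) D) (hX : X ∉ Set.center (Matrix (Fin n) (Fin n) D)),
      (IsIdempotentElem X ∨ IsNilpotent X) ∧
      (commutingGraph (Matrix (Fin n) (Fin n) D)).edist ⟨A, hA⟩ ⟨X, hX⟩ ≤ 1 :=
  dist_to_idempotents_nilpotents_le_one_of_not_isField_general F D n A hA hnotfield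
end

section
/- Let F be an algebraically closed field and let n ≥ 3. Then the commuting graph Γ(M_n(F)) is connected and its diameter equals 4. -/
/-!
Upper bound: over an algebraically closed field every matrix `A` has an eigenvalue with a right
eigenvector `v` and a left eigenvector `w`, so `A` commutes with the rank-one matrix `v wᵀ`. Two
rank-one matrices `v wᵀ` and `x yᵀ` both commute with `z uᵀ` as soon as `z ⊥ w, y` and `u ⊥ v, x`
(all the products vanish), and such nonzero `z, u` exist when `n ≥ 3`. This gives a path of length
at most 4 between any two vertices.

Lower bound: let `J` be the nilpotent Jordan block. Matrices commuting with `J` are upper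
triangular Toeplitz, those commuting with `Jᵀ` lower triangular Toeplitz. After subtracting
scalars, commutation of two such matrices makes the cross-correlation of their first rows vanish at
every lag; at the lag joining the first nonzero entry of one sequence to the last nonzero entry of
the other this correlation is a single nonzero product. So there is no path `J - C - D - Jᵀ`.
-/

open Matrix Finset

section Correlation

variable {R : Type*}

theorem Finset.sum_range_ite_sub_mul [NonUnitalNonAssocSemiring R] (f g : ℕ → R) (m N : ℕ)
    (hg : ∀ k, N ≤ k → g k = 0) :
    ∑ t ∈ range N, (if m ≤ t then f (t - m) * g t else 0) = ∑ k ∈ range N, f k * g (k + m) := by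
  have hshift : ∀ k, (if m ≤ m + k then f (m + k - m) * g (m + k) else 0) = f k * g (k + m) := by
    intro k
    rw [if_pos (Nat.le_add_right m k), Nat.add_sub_cancel_left, add_comm]
  calc ∑ t ∈ range N, (if m ≤ t then f (t - m) * g t else 0)
      = ∑ t ∈ range (m + N), (if m ≤ t then f (t - m) * g t else 0) := by
        rw [add_comm, sum_range_add, sum_eq_zero (s := range m), add_zero]
        exact fun k _ => by rw [hg (N + k) (Nat.le_add_right N k), mul_zero, ite_self]
    _ = ∑ k ∈ range N, f k * g (k + m) := by
        rw [sum_range_add, sum_eq_zero fun t ht => if_neg (by simpa using ht), zero_add]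
        simp only [hshift]

theorem eq_zero_or_eq_zero_of_correlation_eq_zero [Semiring R] [NoZeroDivisors R]
    {f g : ℕ → R} {N : ℕ} (hf : ∀ k, N ≤ k → f k = 0) (hg : ∀ k, N ≤ k → g k = 0)
    (h₁ : ∀ m, ∑ k ∈ range N, f k * g (k + m) = 0)
    (h₂ : ∀ m, ∑ k ∈ range N, g k * f (k + m) = 0) : f = 0 ∨ g = 0 := by
  classical
  by_contra! ⟨hf0, hg0⟩
  have hfr : ∃ k, f k ≠ 0 := Function.ne_iff.1 hf0
  obtain ⟨q, hq⟩ := Function.ne_iff.1 hg0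
  set r := Nat.find hfr
  set K := Nat.findGreatest (g · ≠ 0) N
  have hrN : r < N := by
    by_contra! h
    exact Nat.find_spec hfr (hf r h)
  have hqN : q ≤ N := by
    by_contra! h
    exact hq (hg q h.le)
  have hgK : g K ≠ 0 := Nat.findGreatest_spec (P := (g · ≠ 0)) hqN hq
  have hKN : K < N := by
    by_contra! h
    exact hgK (hg K h)
  have hf_lt : ∀ k < r, f k = 0 := fun k hk => not_not.1 (Nat.find_min hfr hk)
  have hg_gt : ∀ k, K < k → g k = 0 := fun k hk => by
    by_cases hkN : k ≤ N
    · exact not_not.1 (Nat.findGreatest_is_greatest hk hkN)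
    · exact hg k (by omega)
  rcases le_or_gt r K with hrK | hKr
  · have h := h₁ (K - r)
    rw [sum_eq_single_of_mem r (mem_range.2 hrN), Nat.add_sub_cancel' hrK] at h
    · exact mul_ne_zero (Nat.find_spec hfr) hgK h
    · intro k _ hkr
      rcases lt_or_gt_of_ne hkr with hk | hk
      · rw [hf_lt k hk, zero_mul]
      · rw [hg_gt _ (by omega), mul_zero]
  · have h := h₂ (r - K)
    rw [sum_eq_single_of_mem K (mem_range.2 hKN), Nat.add_sub_cancel' hKr.le] at h
    · exact mul_ne_zero hgK (Nat.find_spec hfr) h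
    · intro k _ hkK
      rcases lt_or_gt_of_ne hkK with hk | hk
      · rw [hf_lt _ (by omega), mul_zero]
      · rw [hg_gt k hk, zero_mul]

end Correlation

namespace Matrix

section RankOne

variable {ι : Type*} [Fintype ι]

theorem commute_vecMulVec_of_eigenvectors {R : Type*} [CommSemiring R] {A : Matrix ι ι R} {μ : R}
    {v w : ι → R} (hv : A *ᵥ v = μ • v) (hw : w ᵥ* A = μ • w) : Commute A (vecMulVec v w) := by
  rw [commute_iff_eq, mul_vecMulVec, vecMulVec_mul, hv, hw, smul_vecMulVec, vecMulVec_smul]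

theorem commute_vecMulVec_of_dotProduct_eq_zero {R : Type*} [CommSemiring R] {v w x y : ι → R}
    (hwx : w ⬝ᵥ x = 0) (hyv : y ⬝ᵥ v = 0) : Commute (vecMulVec v w) (vecMulVec x y) := by
  rw [commute_iff_eq, vecMulVec_mul_vecMulVec, vecMulVec_mul_vecMulVec, hwx, hyv, zero_smul,
    zero_smul, vecMulVec_zero, vecMulVec_zero]

variable {F : Type*} [Field F]

theorem exists_ne_zero_mulVec_eq_zero_of_card_lt {κ : Type*} [Fintype κ] (M : Matrix κ ι F)
    (h : Fintype.card κ < Fintype.card ι) : ∃ z ≠ 0, M *ᵥ z = 0 := by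
  obtain ⟨z, hz, hz0⟩ :=
    (Submodule.ne_bot_iff _).1 (LinearMap.ker_ne_bot_of_finrank_lt (f := M.mulVecLin) (by simpa))
  exact ⟨z, hz0, hz⟩

theorem exists_ne_zero_dotProduct_eq_zero (h : 2 < Fintype.card ι) (w y : ι → F) :
    ∃ z ≠ 0, w ⬝ᵥ z = 0 ∧ y ⬝ᵥ z = 0 := by
  obtain ⟨z, hz0, hz⟩ := exists_ne_zero_mulVec_eq_zero_of_card_lt (of ![w, y]) (by simpa using h)
  exact ⟨z, hz0, congrFun hz 0, congrFun hz 1⟩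

variable [DecidableEq ι]

theorem exists_eigenvector_and_left_eigenvector [IsAlgClosed F] [Nonempty ι] (A : Matrix ι ι F) :
    ∃ μ : F, ∃ v w : ι → F, v ≠ 0 ∧ w ≠ 0 ∧ A *ᵥ v = μ • v ∧ w ᵥ* A = μ • w := by
  obtain ⟨μ, hμ⟩ := IsAlgClosed.exists_root A.charpoly
    (by rw [charpoly_degree_eq_dim]; exact_mod_cast Fintype.card_ne_zero)
  have hdet : (scalar ι μ - A).det = 0 := by rwa [← eval_charpoly]
  obtain ⟨v, hv0, hv⟩ := exists_mulVec_eq_zero_iff.2 hdet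
  obtain ⟨w, hw0, hw⟩ := exists_vecMul_eq_zero_iff.2 hdet
  refine ⟨μ, v, w, hv0, hw0, ?_, ?_⟩
  · rw [sub_mulVec, sub_eq_zero] at hv
    simpa [scalar_apply, mulVec_diagonal, funext_iff] using hv.symm
  · rw [vecMul_sub, sub_eq_zero] at hw
    simpa [scalar_apply, vecMul_diagonal, funext_iff, mul_comm] using hw.symm

theorem vecMulVec_notMem_center (h : 1 < Fintype.card ι) {v w : ι → F} (hv : v ≠ 0) (hw : w ≠ 0) :
    vecMulVec v w ∉ Set.center (Matrix ι ι F) := by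
  rw [center_eq_range]
  rintro ⟨c, hc⟩
  have hc0 : c ≠ 0 := by
    rintro rfl
    simp [eq_comm, vecMulVec_eq_zero, hv, hw] at hc
  have := rank_vecMulVec_le v w
  rw [← hc, rank_of_isUnit _ ((scalar ι).isUnit_map hc0.isUnit)] at this
  omega

theorem exists_noncentral_commute_chain [IsAlgClosed F] (h : 2 < Fintype.card ι)
    (A B : Matrix ι ι F) :
    ∃ x y z : {X : Matrix ι ι F // X ∉ Set.center (Matrix ι ι F)},
      Commute A x ∧ Commute (x : Matrix ι ι F) y ∧ Commute (y : Matrix ι ι F) z ∧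
        Commute (z : Matrix ι ι F) B := by
  have : Nonempty ι := Fintype.card_pos_iff.1 (by omega)
  obtain ⟨μ, v, w, hv0, hw0, hv, hw⟩ := A.exists_eigenvector_and_left_eigenvector
  obtain ⟨ν, x, y, hx0, hy0, hx, hy⟩ := B.exists_eigenvector_and_left_eigenvector
  obtain ⟨z, hz0, hwz, hyz⟩ := exists_ne_zero_dotProduct_eq_zero h w y
  obtain ⟨u, hu0, hvu, hxu⟩ := exists_ne_zero_dotProduct_eq_zero h v x
  refine ⟨⟨vecMulVec v w, vecMulVec_notMem_center (by omega) hv0 hw0⟩,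
    ⟨vecMulVec z u, vecMulVec_notMem_center (by omega) hz0 hu0⟩,
    ⟨vecMulVec x y, vecMulVec_notMem_center (by omega) hx0 hy0⟩,
    commute_vecMulVec_of_eigenvectors hv hw, ?_, ?_, (commute_vecMulVec_of_eigenvectors hx hy).symm⟩
  · exact commute_vecMulVec_of_dotProduct_eq_zero hwz (by rwa [dotProduct_comm])
  · exact commute_vecMulVec_of_dotProduct_eq_zero (by rwa [dotProduct_comm]) hyz

end RankOne

section JordanBlock

variable {R : Type*} {n : ℕ}

def nilpotentJordanBlock (R : Type*) [Zero R] [One R] (n : ℕ) : Matrix (Fin n) (Fin n) R :=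
  of fun i j => if (i : ℕ) + 1 = j then 1 else 0

def firstRow [Zero R] (M : Matrix (Fin n) (Fin n) R) (k : ℕ) : R :=
  if h : k < n then M ⟨0, by omega⟩ ⟨k, h⟩ else 0

section Zero

variable [Zero R] (M : Matrix (Fin n) (Fin n) R)

theorem firstRow_eq_zero_of_le {k : ℕ} (hk : n ≤ k) : M.firstRow k = 0 :=
  dif_neg (by omega)

theorem firstRow_val (j : Fin n) : M.firstRow j = M ⟨0, j.pos⟩ j :=
  dif_pos j.isLt

theorem firstRow_transpose_zero : Mᵀ.firstRow 0 = M.firstRow 0 :=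
  rfl

end Zero

theorem firstRow_sub_scalar_firstRow_zero [Ring R] (M : Matrix (Fin n) (Fin n) R) :
    (M - scalar (Fin n) (M.firstRow 0)).firstRow 0 = 0 := by
  unfold firstRow
  split_ifs <;> simp

variable [Semiring R]

theorem nilpotentJordanBlock_mul_apply (C : Matrix (Fin n) (Fin n) R) (i j : Fin n) :
    (nilpotentJordanBlock R n * C) i j = if h : (i : ℕ) + 1 < n then C ⟨i + 1, h⟩ j else 0 := by
  rw [mul_apply]
  split_ifs with h
  · rw [sum_eq_single ⟨i + 1, h⟩]
    · simp [nilpotentJordanBlock]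
    · intro k _ hk
      rw [nilpotentJordanBlock, of_apply, if_neg (fun h' => hk (Fin.ext h'.symm)), zero_mul]
    · simp
  · exact sum_eq_zero fun k _ => by
      rw [nilpotentJordanBlock, of_apply, if_neg (by omega), zero_mul]

theorem mul_nilpotentJordanBlock_apply (C : Matrix (Fin n) (Fin n) R) (i j : Fin n) :
    (C * nilpotentJordanBlock R n) i j =
      if h : 0 < (j : ℕ) then C i ⟨j - 1, by omega⟩ else 0 := by
  rw [mul_apply]
  split_ifs with h
  · rw [sum_eq_single ⟨j - 1, by omega⟩]
    · rw [nilpotentJordanBlock, of_apply, if_pos (by simp only; omega), mul_one]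
    · intro k _ hk
      rw [nilpotentJordanBlock, of_apply, if_neg (fun h' => hk (Fin.ext (by simp only; omega))),
        mul_zero]
    · simp
  · exact sum_eq_zero fun k _ => by
      rw [nilpotentJordanBlock, of_apply, if_neg (by omega), mul_zero]

theorem apply_eq_firstRow_of_commute_nilpotentJordanBlock {C : Matrix (Fin n) (Fin n) R}
    (hC : Commute (nilpotentJordanBlock R n) C) (i j : Fin n) :
    C i j = if (i : ℕ) ≤ j then C.firstRow (j - i) else 0 := by
  obtain ⟨a, ha⟩ := i
  induction a generalizing j with
  | zero => simp [firstRow]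
  | succ a ih =>
    have h := congrFun₂ hC.eq ⟨a, by omega⟩ j
    rw [nilpotentJordanBlock_mul_apply, mul_nilpotentJordanBlock_apply, dif_pos ha] at h
    rw [h]
    split_ifs with hj hle hle <;> simp only at hle
    · rw [ih, if_pos (by simp only; omega)]
      congr 1
      simp only
      omega
    · rw [ih, if_neg (by simp only; omega)]
    · omega
    · rfl

theorem eq_zero_of_firstRow_eq_zero {C : Matrix (Fin n) (Fin n) R}
    (hC : Commute (nilpotentJordanBlock R n) C) (h : C.firstRow = 0) : C = 0 := by
  ext i j
  rw [apply_eq_firstRow_of_commute_nilpotentJordanBlock hC, h]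
  simp

theorem sum_firstRow_mul_firstRow_eq_zero {P Q : Matrix (Fin n) (Fin n) R}
    (hP : Commute (nilpotentJordanBlock R n) P) (hP₀ : P.firstRow 0 = 0) (hPQ : Commute P Qᵀ)
    (m : ℕ) : ∑ k ∈ range n, P.firstRow k * Q.firstRow (k + m) = 0 := by
  rcases lt_or_ge m n with hm | hm
  · have hcol : ∀ t : Fin n, P t ⟨0, by omega⟩ = 0 := fun t => by
      rw [apply_eq_firstRow_of_commute_nilpotentJordanBlock hP]
      split_ifs with ht
      · rwa [show (0 : ℕ) - t = 0 by omega]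
      · rfl
    -- entry `(m, 0)` of `P * Qᵀ = Qᵀ * P`; the right side vanishes with column `0` of `P`
    have h := congrFun₂ hPQ.eq ⟨m, hm⟩ ⟨0, by omega⟩
    simp only [mul_apply, hcol, mul_zero, sum_const_zero] at h
    rw [← h, ← sum_range_ite_sub_mul _ _ _ _ fun k => Q.firstRow_eq_zero_of_le,
      ← Fin.sum_univ_eq_sum_range (fun t => if m ≤ t then P.firstRow (t - m) * Q.firstRow t else 0)]
    refine sum_congr rfl fun t _ => ?_
    rw [apply_eq_firstRow_of_commute_nilpotentJordanBlock hP, transpose_apply, ← Q.firstRow_val,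
      ite_mul, zero_mul]
  · exact sum_eq_zero fun k _ => by rw [Q.firstRow_eq_zero_of_le (by omega), mul_zero]

end JordanBlock

protected theorem _root_.Commute.transpose {ι R : Type*} [Fintype ι] [CommSemiring R]
    {A B : Matrix ι ι R} (h : Commute A B) : Commute Aᵀ Bᵀ := by
  rw [commute_iff_eq, ← transpose_mul, ← transpose_mul, h.eq]

theorem sub_scalar_ne_zero_of_notMem_center {ι R : Type*} [Fintype ι] [DecidableEq ι] [CommRing R]
    {M : Matrix ι ι R} (hM : M ∉ Set.center (Matrix ι ι R)) (c : R) : M - scalar ι c ≠ 0 := by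
  rw [center_eq_range] at hM
  exact fun h => hM ⟨c, (sub_eq_zero.1 h).symm⟩

theorem transpose_notMem_center {ι R : Type*} [Fintype ι] [DecidableEq ι] [CommSemiring R]
    {M : Matrix ι ι R} (hM : M ∉ Set.center (Matrix ι ι R)) : Mᵀ ∉ Set.center (Matrix ι ι R) := by
  rw [center_eq_range] at hM ⊢
  rintro ⟨c, hc⟩
  exact hM ⟨c, by rw [← transpose_transpose M, ← hc, scalar_apply, diagonal_transpose]⟩

theorem nilpotentJordanBlock_notMem_center {R : Type*} [CommSemiring R] [Nontrivial R] {n : ℕ}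
    (hn : 2 ≤ n) : nilpotentJordanBlock R n ∉ Set.center (Matrix (Fin n) (Fin n) R) := by
  rw [center_eq_range]
  rintro ⟨c, hc⟩
  have h := congrFun₂ hc ⟨0, by omega⟩ ⟨1, by omega⟩
  simp [nilpotentJordanBlock, scalar_apply, Fin.ext_iff] at h

theorem not_commute_chain_nilpotentJordanBlock_transpose {R : Type*} [CommRing R]
    [NoZeroDivisors R] {n : ℕ} {C D : Matrix (Fin n) (Fin n) R}
    (hC : C ∉ Set.center (Matrix (Fin n) (Fin n) R))
    (hD : D ∉ Set.center (Matrix (Fin n) (Fin n) R)) :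
    ¬ (Commute (nilpotentJordanBlock R n) C ∧ Commute C D ∧
      Commute D (nilpotentJordanBlock R n)ᵀ) := by
  rintro ⟨h₁, h₂, h₃⟩
  have hscalar : ∀ (c : R) (M : Matrix (Fin n) (Fin n) R), Commute (scalar (Fin n) c) M :=
    fun c => scalar_commute c (Commute.all c)
  set P := C - scalar (Fin n) (C.firstRow 0)
  set Q := (D - scalar (Fin n) (D.firstRow 0))ᵀ
  have hP : Commute (nilpotentJordanBlock R n) P := h₁.sub_right (hscalar _ _).symm
  have hQ : Commute (nilpotentJordanBlock R n) Q := (h₃.sub_left (hscalar _ _)).transpose.symm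
  have hPQ : Commute P Qᵀ := by
    rw [transpose_transpose]
    exact (h₂.sub_right (hscalar _ _).symm).sub_left (hscalar _ _)
  have hQP : Commute Q Pᵀ := by simpa using hPQ.transpose.symm
  rcases eq_zero_or_eq_zero_of_correlation_eq_zero (fun _ => P.firstRow_eq_zero_of_le)
      (fun _ => Q.firstRow_eq_zero_of_le)
      (sum_firstRow_mul_firstRow_eq_zero hP (firstRow_sub_scalar_firstRow_zero C) hPQ)
      (sum_firstRow_mul_firstRow_eq_zero hQ
        ((firstRow_transpose_zero _).trans (firstRow_sub_scalar_firstRow_zero D)) hQP)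
    with h | h
  · exact sub_scalar_ne_zero_of_notMem_center hC _ (eq_zero_of_firstRow_eq_zero hP h)
  · exact sub_scalar_ne_zero_of_notMem_center hD _
      (transpose_eq_zero.1 (eq_zero_of_firstRow_eq_zero hQ h))

end Matrix

namespace commutingGraph

variable {R : Type*} [Ring R] {a b : {x : R // x ∉ Set.center R}}

theorem edist_le_one_of_commute (h : Commute (a : R) b) : (commutingGraph R).edist a b ≤ 1 := by
  rcases eq_or_ne a b with rfl | hne
  · simp
  · exact (SimpleGraph.edist_eq_one_iff_adj.2 (show (commutingGraph R).Adj a b from ⟨hne, h⟩)).le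

theorem edist_le_four_of_commute {x y z : {x : R // x ∉ Set.center R}} (hax : Commute (a : R) x)
    (hxy : Commute (x : R) y) (hyz : Commute (y : R) z) (hzb : Commute (z : R) b) :
    (commutingGraph R).edist a b ≤ 4 :=
  calc (commutingGraph R).edist a b
      ≤ (commutingGraph R).edist a x + ((commutingGraph R).edist x y +
          ((commutingGraph R).edist y z + (commutingGraph R).edist z b)) :=
        SimpleGraph.edist_triangle.trans <| add_le_add_right
          (SimpleGraph.edist_triangle.trans <| add_le_add_right SimpleGraph.edist_triangle _) _
    _ ≤ 1 + (1 + (1 + 1)) := by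
        gcongr <;> exact edist_le_one_of_commute ‹_›
    _ = 4 := by norm_num

theorem exists_commute_chain_of_walk (p : (commutingGraph R).Walk a b) (hp : p.length ≤ 3) :
    ∃ x y : {x : R // x ∉ Set.center R},
      Commute (a : R) x ∧ Commute (x : R) y ∧ Commute (y : R) b :=
  match p, hp with
  | .nil, _ => ⟨a, a, .refl _, .refl _, .refl _⟩
  | .cons h .nil, _ => ⟨b, b, h.2, .refl _, .refl _⟩
  | .cons h (.cons h' .nil), _ => ⟨_, _, h.2, .refl _, h'.2⟩
  | .cons h (.cons h' (.cons h'' .nil)), _ => ⟨_, _, h.2, h'.2, h''.2⟩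
  | .cons _ (.cons _ (.cons _ (.cons _ _))), hp => by simp at hp; omega

theorem four_le_edist_of_forall_not_commute
    (h : ∀ x y : {x : R // x ∉ Set.center R},
      ¬ (Commute (a : R) x ∧ Commute (x : R) y ∧ Commute (y : R) b)) :
    4 ≤ (commutingGraph R).edist a b := by
  by_contra! hlt
  obtain ⟨p, hp⟩ := SimpleGraph.exists_walk_of_edist_ne_top (hlt.trans_le le_top).ne
  obtain ⟨x, y, hxy⟩ := exists_commute_chain_of_walk p (by
    rw [← hp] at hlt; exact Order.le_of_lt_add_one (by exact_mod_cast hlt))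
  exact h x y hxy

end commutingGraph

/-- For an algebraically closed field `F` and `n ≥ 3`, the commuting graph
of `M_n(F)` is connected and has diameter 4. -/
theorem algClosed_commuting_graph_connected_diam_four
    (F : Type*) [Field F] [IsAlgClosed F] (n : ℕ) (hn : 3 ≤ n) :
    (commutingGraph (Matrix (Fin n) (Fin n) F)).Connected ∧
      (commutingGraph (Matrix (Fin n) (Fin n) F)).ediam = 4 := by
  set G := commutingGraph (Matrix (Fin n) (Fin n) F)
  have hJ := nilpotentJordanBlock_notMem_center (R := F) (by omega : 2 ≤ n)
  have upper : ∀ a b, G.edist a b ≤ 4 := fun a b => by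
    obtain ⟨x, y, z, h₁, h₂, h₃, h₄⟩ :=
      exists_noncentral_commute_chain (by rwa [Fintype.card_fin]) a.1 b.1
    exact commutingGraph.edist_le_four_of_commute h₁ h₂ h₃ h₄
  have lower : 4 ≤ G.edist ⟨_, hJ⟩ ⟨_, transpose_notMem_center hJ⟩ :=
    commutingGraph.four_le_edist_of_forall_not_commute
      fun x y => not_commute_chain_nilpotentJordanBlock_transpose x.2 y.2
  have hdiam : G.ediam = 4 :=
    le_antisymm (SimpleGraph.ediam_le_of_edist_le upper) (lower.trans SimpleGraph.edist_le_ediam)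
  have : Nonempty {X : Matrix (Fin n) (Fin n) F // X ∉ Set.center (Matrix (Fin n) (Fin n) F)} :=
    ⟨⟨_, hJ⟩⟩
  exact ⟨SimpleGraph.connected_of_ediam_ne_top (by simp [hdiam]), hdiam⟩
end
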